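/- Let f be an L(1,2)-edge labeling of T8, let S be a unit square, and let c ≥ 1. Suppose e, e', e'' ∈ G_S are the three edges of a triangle of T8, with e non-slanting, f(e) = c, f(e') = c − 1 and f(e'') = c + 1. Then there exist two distinct unit squares S1, S2, each with all vertices in S', such that no edge in G_{S1} and no edge in G_{S2} has label c under f. -/

import Mathlib

/-- The infinite octagonal grid (king graph on `ℤ × ℤ`): distinct vertices are
adjacent iff their Chebyshev distance is `1`. -/
def T8 : SimpleGraph (ℤ × ℤ) where
  Adj u v := u ≠ v ∧ max |u.1 - v.1| |u.2 - v.2| = 1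
  symm := by
    constructor
    rintro u v ⟨h1, h2⟩
    refine ⟨h1.symm, ?_⟩
    rw [abs_sub_comm v.1 u.1, abs_sub_comm v.2 u.2]
    exact h2
  loopless := by constructor; rintro u ⟨h, -⟩; exact h rfl

/-- Two (unordered pairs regarded as) edges share an endpoint. -/
def SharesEndpoint (e1 e2 : Sym2 (ℤ × ℤ)) : Prop := ∃ v, v ∈ e1 ∧ v ∈ e2

/-- Two edges of `T8` are at distance `1`: distinct and sharing an endpoint. -/
def EdgeDist1 (e1 e2 : Sym2 (ℤ × ℤ)) : Prop := e1 ≠ e2 ∧ SharesEndpoint e1 e2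

/-- Two edges of `T8` are at distance `2`: distinct, sharing no endpoint, but some
edge of `T8` shares an endpoint with both. -/
def EdgeDist2 (e1 e2 : Sym2 (ℤ × ℤ)) : Prop :=
  e1 ≠ e2 ∧ ¬ SharesEndpoint e1 e2 ∧
    ∃ e3 ∈ T8.edgeSet, SharesEndpoint e1 e3 ∧ SharesEndpoint e3 e2

/-- `f` is an `L(1,2)`-edge labeling of `T8`: edges at distance `1` get distinct
labels and edges at distance `2` get labels differing by at least `2`. -/
def IsL12 (f : Sym2 (ℤ × ℤ) → ℕ) : Prop :=
  (∀ e1 ∈ T8.edgeSet, ∀ e2 ∈ T8.edgeSet, EdgeDist1 e1 e2 → f e1 ≠ f e2) ∧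
  (∀ e1 ∈ T8.edgeSet, ∀ e2 ∈ T8.edgeSet, EdgeDist2 e1 e2 → 2 ≤ |(f e1 : ℤ) - (f e2 : ℤ)|)

/-- An `L(1,2)`-edge labeling of `T8` with labels in `{0, …, n}`. -/
def IsL12Bounded (n : ℕ) (f : Sym2 (ℤ × ℤ) → ℕ) : Prop :=
  IsL12 f ∧ ∀ e ∈ T8.edgeSet, f e ≤ n

/-- The unit square `S(a,b)`. -/
def unitSquare (a b : ℤ) : Set (ℤ × ℤ) :=
  {(a, b), (a + 1, b), (a, b + 1), (a + 1, b + 1)}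

/-- `GS S`: the set of edges of `T8` incident to at least one vertex of `S`. -/
def GS (S : Set (ℤ × ℤ)) : Set (Sym2 (ℤ × ℤ)) :=
  {e | e ∈ T8.edgeSet ∧ ∃ v ∈ S, v ∈ e}

/-- `Sprime a b`: vertices at Chebyshev distance at most `2` from some vertex of
`S(a,b)` (that is, `S ∪ N(S) ∪ N(N(S))`). -/
def Sprime (a b : ℤ) : Set (ℤ × ℤ) :=
  {u | ∃ v ∈ unitSquare a b, max |u.1 - v.1| |u.2 - v.2| ≤ 2}

/-- Two edges sharing an endpoint `v`, written `e1 = {v, v+d1}` and `e2 = {v, v+d2}`,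
are at angle `45°` if exactly one of `d1, d2` has both coordinates nonzero and
`d1 · d2 = 1`. -/
def Angle45 (e1 e2 : Sym2 (ℤ × ℤ)) : Prop :=
  ∃ v d1 d2 : ℤ × ℤ, e1 = s(v, v + d1) ∧ e2 = s(v, v + d2) ∧
    Xor' (d1.1 ≠ 0 ∧ d1.2 ≠ 0) (d2.1 ≠ 0 ∧ d2.2 ≠ 0) ∧
    d1.1 * d2.1 + d1.2 * d2.2 = 1

/-- An edge is slanting if its endpoints differ in both coordinates. -/
def Slanting (e : Sym2 (ℤ × ℤ)) : Prop :=
  ∃ u v : ℤ × ℤ, e = s(u, v) ∧ u.1 ≠ v.1 ∧ u.2 ≠ v.2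

/-- `e, e', e''` form the edge set of a triangle of `T8`. -/
def TriangleEdgeSet (e e' e'' : Sym2 (ℤ × ℤ)) : Prop :=
  ∃ u v w : ℤ × ℤ, T8.Adj u v ∧ T8.Adj v w ∧ T8.Adj u w ∧
    ({e, e', e''} : Set (Sym2 (ℤ × ℤ))) = {s(u, v), s(v, w), s(u, w)}

/-- A triangle of `T8`: three pairwise adjacent vertices. -/
def IsTriangle (t : Finset (ℤ × ℤ)) : Prop :=
  t.card = 3 ∧ ∀ u ∈ t, ∀ v ∈ t, u ≠ v → T8.Adj u v

/-- The edges of a triangle. -/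
def triangleEdges (t : Finset (ℤ × ℤ)) : Set (Sym2 (ℤ × ℤ)) :=
  {e | ∃ u ∈ t, ∃ v ∈ t, u ≠ v ∧ e = s(u, v)}


/-!
Write `e = pq` and let `r` be the apex of the triangle, so that `e' = pr` after possibly
swapping `p` and `q`. Let `g` be an edge through a vertex of the closed neighbourhood `N[r]`
other than `p, q`. If `g` comes within distance one of `e`, it is at distance `1` or `2`
from `e`, so its label is not `c`. Otherwise `g` shares no endpoint with `e' ⊆ N[p]` and is
joined to it through `r`, so its label differs from `c - 1` by at least `2`, and again is not
`c`. Since `e` is horizontal or vertical, `N[r] \ {p, q}` contains two unit squares, and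
`N[r]` lies in `S'` because `r` is adjacent to a vertex of `S`.
-/

def closedNbhd (v : ℤ × ℤ) : Set (ℤ × ℤ) := insert v (T8.neighborSet v)

lemma T8_adj_iff {u v : ℤ × ℤ} :
    T8.Adj u v ↔ u ≠ v ∧ |u.1 - v.1| ≤ 1 ∧ |u.2 - v.2| ≤ 1 := by
  refine ⟨fun ⟨hne, h⟩ => ⟨hne, max_le_iff.mp h.le⟩, fun ⟨hne, h1, h2⟩ => ⟨hne, ?_⟩⟩
  refine le_antisymm (max_le h1 h2) ?_
  rw [Ne, Prod.ext_iff, not_and_or] at hne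
  rcases hne with h | h
  · exact le_max_of_le_left (Int.one_le_abs (sub_ne_zero.mpr h))
  · exact le_max_of_le_right (Int.one_le_abs (sub_ne_zero.mpr h))

lemma mem_closedNbhd_iff {u v : ℤ × ℤ} :
    u ∈ closedNbhd v ↔ |u.1 - v.1| ≤ 1 ∧ |u.2 - v.2| ≤ 1 := by
  rw [closedNbhd, Set.mem_insert_iff, SimpleGraph.mem_neighborSet, T8.adj_comm, T8_adj_iff]
  by_cases h : u = v
  · subst h
    simp
  · simp [h]

lemma mem_unitSquare_iff {v : ℤ × ℤ} {a b : ℤ} :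
    v ∈ unitSquare a b ↔ (v.1 = a ∨ v.1 = a + 1) ∧ (v.2 = b ∨ v.2 = b + 1) := by
  obtain ⟨x, y⟩ := v
  simp only [unitSquare, Set.mem_insert_iff, Set.mem_singleton_iff, Prod.mk.injEq]
  tauto

lemma closedNbhd_subset_Sprime {a b : ℤ} {p r : ℤ × ℤ} (hp : p ∈ unitSquare a b)
    (hr : r ∈ closedNbhd p) : closedNbhd r ⊆ Sprime a b := by
  intro v hv
  rw [mem_closedNbhd_iff, abs_le, abs_le] at hr hv
  refine ⟨p, hp, ?_⟩
  rw [max_le_iff, abs_le, abs_le]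
  omega

/-- The two squares lie on the side of `r` away from the non-slanting edge `pq`. -/
lemma exists_two_unitSquares_subset_closedNbhd_diff {p q r : ℤ × ℤ}
    (hns : p.1 = q.1 ∨ p.2 = q.2) (hpq : T8.Adj p q) (hpr : T8.Adj p r) (hqr : T8.Adj q r) :
    ∃ s t : ℤ × ℤ, s ≠ t ∧ unitSquare s.1 s.2 ⊆ closedNbhd r \ {p, q} ∧
      unitSquare t.1 t.2 ⊆ closedNbhd r \ {p, q} := by
  rw [T8_adj_iff, Ne, Prod.ext_iff, abs_le, abs_le] at hpq hpr hqr
  have hsq : ∀ s : ℤ × ℤ, (r.1 - 1 ≤ s.1 ∧ s.1 ≤ r.1 ∧ r.2 - 1 ≤ s.2 ∧ s.2 ≤ r.2) ∧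
      (p.1 < s.1 ∨ s.1 + 1 < p.1 ∨ p.2 < s.2 ∨ s.2 + 1 < p.2) ∧
      (q.1 < s.1 ∨ s.1 + 1 < q.1 ∨ q.2 < s.2 ∨ s.2 + 1 < q.2) →
      unitSquare s.1 s.2 ⊆ closedNbhd r \ {p, q} := by
    intro s hs v hv
    rw [mem_unitSquare_iff] at hv
    simp only [Set.mem_sdiff, mem_closedNbhd_iff, abs_le, Set.mem_insert_iff,
      Set.mem_singleton_iff, Prod.ext_iff]
    omega
  rcases hns with h | h
  · rcases show r.1 = p.1 + 1 ∨ r.1 = p.1 - 1 by omega with hr | hr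
    · exact ⟨(r.1, r.2 - 1), (r.1, r.2), by simp [Prod.ext_iff],
        hsq _ (by dsimp only; omega), hsq _ (by dsimp only; omega)⟩
    · exact ⟨(r.1 - 1, r.2 - 1), (r.1 - 1, r.2), by simp [Prod.ext_iff],
        hsq _ (by dsimp only; omega), hsq _ (by dsimp only; omega)⟩
  · rcases show r.2 = p.2 + 1 ∨ r.2 = p.2 - 1 by omega with hr | hr
    · exact ⟨(r.1 - 1, r.2), (r.1, r.2), by simp [Prod.ext_iff],
        hsq _ (by dsimp only; omega), hsq _ (by dsimp only; omega)⟩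
    · exact ⟨(r.1 - 1, r.2 - 1), (r.1, r.2 - 1), by simp [Prod.ext_iff],
        hsq _ (by dsimp only; omega), hsq _ (by dsimp only; omega)⟩

lemma exists_eq_edges_of_mem_triangle {V : Type*} {G : SimpleGraph V} {u v w : V}
    (huv : G.Adj u v) (hvw : G.Adj v w) (huw : G.Adj u w) {e e' : Sym2 V}
    (he : e ∈ ({s(u, v), s(v, w), s(u, w)} : Set (Sym2 V)))
    (he' : e' ∈ ({s(u, v), s(v, w), s(u, w)} : Set (Sym2 V))) (hne : e ≠ e') :
    ∃ p q r, G.Adj p q ∧ G.Adj p r ∧ G.Adj q r ∧ e = s(p, q) ∧ e' = s(p, r) := by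
  simp only [Set.mem_insert_iff, Set.mem_singleton_iff] at he he'
  rcases he with rfl | rfl | rfl <;> rcases he' with rfl | rfl | rfl
  all_goals first
    | exact absurd rfl hne
    | exact ⟨u, v, w, huv, huw, hvw, rfl, rfl⟩
    | exact ⟨v, u, w, huv.symm, hvw, huw, Sym2.eq_swap, rfl⟩
    | exact ⟨v, w, u, hvw, huv.symm, huw.symm, rfl, Sym2.eq_swap⟩
    | exact ⟨w, v, u, hvw.symm, huw.symm, huv.symm, Sym2.eq_swap, Sym2.eq_swap⟩
    | exact ⟨u, w, v, huw, huv, hvw.symm, rfl, rfl⟩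
    | exact ⟨w, u, v, huw.symm, hvw.symm, huv, Sym2.eq_swap, Sym2.eq_swap⟩

namespace IsL12

variable {f : Sym2 (ℤ × ℤ) → ℕ}

lemma two_le_abs_sub_of_adj (hf : IsL12 f) {e₁ e₂ : Sym2 (ℤ × ℤ)} {x y : ℤ × ℤ}
    (he₁ : e₁ ∈ T8.edgeSet) (he₂ : e₂ ∈ T8.edgeSet) (hdisj : ¬ SharesEndpoint e₁ e₂)
    (hx : x ∈ e₁) (hy : y ∈ e₂) (hxy : T8.Adj x y) :
    2 ≤ |(f e₁ : ℤ) - f e₂| :=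
  hf.2 e₁ he₁ e₂ he₂ ⟨fun h => hdisj ⟨x, hx, h ▸ hx⟩, hdisj,
    s(x, y), hxy, ⟨x, hx, Sym2.mem_mk_left x y⟩, ⟨y, Sym2.mem_mk_right x y, hy⟩⟩

lemma apply_ne_of_mem_closedNbhd (hf : IsL12 f) {e₁ e₂ : Sym2 (ℤ × ℤ)} {x y : ℤ × ℤ}
    (he₁ : e₁ ∈ T8.edgeSet) (he₂ : e₂ ∈ T8.edgeSet) (hne : e₁ ≠ e₂)
    (hx : x ∈ e₁) (hy : y ∈ e₂) (hxy : x ∈ closedNbhd y) :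
    f e₁ ≠ f e₂ := by
  by_cases hsh : SharesEndpoint e₁ e₂
  · exact hf.1 e₁ he₁ e₂ he₂ ⟨hne, hsh⟩
  rcases hxy with rfl | hxy
  · exact absurd ⟨x, hx, hy⟩ hsh
  have h := hf.two_le_abs_sub_of_adj he₁ he₂ hsh hx hy (T8.adj_symm hxy)
  intro heq
  rw [heq, sub_self, abs_zero] at h
  omega

lemma apply_ne_of_near_pred_edge (hf : IsL12 f) {e e' e₁ : Sym2 (ℤ × ℤ)} {x r v : ℤ × ℤ}
    (he : e ∈ T8.edgeSet) (he' : e' ∈ T8.edgeSet) (he₁ : e₁ ∈ T8.edgeSet)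
    (hlabel : f e' + 1 = f e) (hx : x ∈ e) (hcover : ∀ y ∈ e', y ∈ closedNbhd x)
    (hr : r ∈ e') (hv : v ∈ closedNbhd r) (hve : v ∉ e) (hve₁ : v ∈ e₁) :
    f e₁ ≠ f e := by
  by_cases hnear : ∃ y ∈ e₁, ∃ z ∈ e, y ∈ closedNbhd z
  · obtain ⟨y, hy, z, hz, hyz⟩ := hnear
    exact hf.apply_ne_of_mem_closedNbhd he₁ he (fun h => hve (h ▸ hve₁)) hy hz hyz
  push Not at hnear
  have hdisj : ¬ SharesEndpoint e₁ e' := fun ⟨y, hy, hy'⟩ => hnear y hy x hx (hcover y hy')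
  rcases hv with rfl | hrv
  · exact absurd (hcover v hr) (hnear v hve₁ x hx)
  have h := hf.two_le_abs_sub_of_adj he₁ he' hdisj hve₁ hr (T8.adj_symm hrv)
  rw [← hlabel]
  rw [le_abs] at h
  omega

end IsL12

theorem triangle_nonslanting_two_squares_general (f : Sym2 (ℤ × ℤ) → ℕ) (hf : IsL12 f)
    (a b : ℤ) (c : ℕ) (hc : 1 ≤ c) (e e' e'' : Sym2 (ℤ × ℤ))
    (he : e ∈ GS (unitSquare a b))
    (htri : TriangleEdgeSet e e' e'') (hsl : ¬ Slanting e)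
    (hfe : f e = c) (hfe' : f e' = c - 1) :
    ∃ p1 p2 : ℤ × ℤ, p1 ≠ p2 ∧
      unitSquare p1.1 p1.2 ⊆ Sprime a b ∧ unitSquare p2.1 p2.2 ⊆ Sprime a b ∧
      (∀ e1 ∈ GS (unitSquare p1.1 p1.2), f e1 ≠ c) ∧
      (∀ e1 ∈ GS (unitSquare p2.1 p2.2), f e1 ≠ c) := by
  obtain ⟨u, v, w, huv, hvw, huw, hset⟩ := htri
  have hne : e ≠ e' := fun h => by rw [h, hfe'] at hfe; omega
  obtain ⟨p, q, r, hpq, hpr, hqr, rfl, rfl⟩ :=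
    exists_eq_edges_of_mem_triangle huv hvw huw (hset ▸ by simp) (hset ▸ by simp) hne
  have hns : p.1 = q.1 ∨ p.2 = q.2 := by
    by_contra! h
    exact hsl ⟨p, q, rfl, h⟩
  have hnbhd : closedNbhd r ⊆ Sprime a b := by
    obtain ⟨-, x, hx, hxe⟩ := he
    rcases Sym2.mem_iff.mp hxe with rfl | rfl
    · exact closedNbhd_subset_Sprime hx (Or.inr hpr)
    · exact closedNbhd_subset_Sprime hx (Or.inr hqr)
  have hfree : ∀ s : ℤ × ℤ, unitSquare s.1 s.2 ⊆ closedNbhd r \ {p, q} →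
      ∀ g ∈ GS (unitSquare s.1 s.2), f g ≠ c := by
    rintro s hs g ⟨hg, v, hv, hvg⟩
    obtain ⟨hvr, hvpq⟩ := hs hv
    have hcover : ∀ y ∈ s(p, r), y ∈ closedNbhd p := by
      intro y hy
      rcases Sym2.mem_iff.mp hy with rfl | rfl
      exacts [Set.mem_insert y _, Or.inr hpr]
    rw [← hfe]
    exact hf.apply_ne_of_near_pred_edge hpq hpr hg (by omega) (Sym2.mem_mk_left p q) hcover
      (Sym2.mem_mk_right p r) hvr (by simpa [Sym2.mem_iff] using hvpq) hvg
  obtain ⟨s, t, hst, hs, ht⟩ := exists_two_unitSquares_subset_closedNbhd_diff hns hpq hpr hqr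
  have hsub : closedNbhd r \ {p, q} ⊆ Sprime a b := Set.sdiff_subset.trans hnbhd
  exact ⟨s, t, hst, hs.trans hsub, ht.trans hsub, hfree s hs, hfree t ht⟩

/-- If three consecutive labels `c-1, c, c+1` are used on the three
edges of a triangle in `G_S` with `c` on the non-slanting edge, then there are two
distinct unit squares with all vertices in `S'` on which `c` is not used. -/
theorem triangle_nonslanting_two_squares (f : Sym2 (ℤ × ℤ) → ℕ) (hf : IsL12 f)
    (a b : ℤ) (c : ℕ) (hc : 1 ≤ c) (e e' e'' : Sym2 (ℤ × ℤ))
    (he : e ∈ GS (unitSquare a b)) (he' : e' ∈ GS (unitSquare a b))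
    (he'' : e'' ∈ GS (unitSquare a b))
    (htri : TriangleEdgeSet e e' e'') (hsl : ¬ Slanting e)
    (hfe : f e = c) (hfe' : f e' = c - 1) (hfe'' : f e'' = c + 1) :
    ∃ p1 p2 : ℤ × ℤ, p1 ≠ p2 ∧
      unitSquare p1.1 p1.2 ⊆ Sprime a b ∧ unitSquare p2.1 p2.2 ⊆ Sprime a b ∧
      (∀ e1 ∈ GS (unitSquare p1.1 p1.2), f e1 ≠ c) ∧
      (∀ e1 ∈ GS (unitSquare p2.1 p2.2), f e1 ≠ c) :=
  triangle_nonslanting_two_squares_general f hf a b c hc e e' e'' he htri hsl hfe hfe'
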